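/- arXiv:1708.02468 — 2 statements merged into one kernel-verified Lean document; each statement's English description precedes it below -/
import Mathlib

section
/- Let G be a topological group which is not strongly amenable (its universal minimal proximal flow Π(G) is not a single point). If t ∈ G satisfies cl⟨Aut(G)t⟩ = G (the closed subgroup generated by the Aut(G)-orbit of t is all of G), then t does not act as the identity on Π(G). -/
universe u v

def IsMinimalFlow (G X : Type*) [Group G] [TopologicalSpace X] [MulAction G X] : Prop :=
  ∀ x : X, Dense (Set.range fun g : G => g • x)

def IsProximalFlow (G X : Type*) [Group G] [TopologicalSpace X] [MulAction G X] : Prop :=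
  ∀ x y : X, ∃ z : X, (z, z) ∈ closure (Set.range fun g : G => (g • x, g • y))

def IsTopAut {G : Type*} [Group G] [TopologicalSpace G] (a : G ≃* G) : Prop :=
  Continuous a ∧ Continuous a.symm

def autOrbit (G : Type*) [Group G] [TopologicalSpace G] (t : G) : Set G :=
  {g : G | ∃ a : G ≃* G, IsTopAut a ∧ a t = g}


/-!
Twisting the action on `Π(G)` by a topological automorphism `a` gives again a minimal proximal
flow, so universality provides a surjection `f : Π(G) → Π(G)` with `f (g • x) = a g • f x`.
Hence the kernel of the action, a closed subgroup, is invariant under `Aut(G)`; if it contains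
`t` it contains the closed subgroup generated by `Aut(G)t`, i.e. all of `G`. A minimal flow on
which `G` acts trivially is a point.
-/

open MulAction Function Set

theorem map_mem_fixingSubgroup_univ {G X : Type*} [Group G] [MulAction G X] {φ : G →* G}
    {f : X → X} (hf : Surjective f)
    (hφf : ∀ (g : G) (x : X), f (g • x) = φ g • f x) {t : G}
    (ht : t ∈ fixingSubgroup G (univ : Set X)) : φ t ∈ fixingSubgroup G (univ : Set X) := by
  rw [mem_fixingSubgroup_iff] at ht ⊢
  intro y _
  obtain ⟨x, rfl⟩ := hf y
  rw [← hφf, ht x (mem_univ x)]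

section Flows

variable {G H X : Type*} [Group G] [Group H] [TopologicalSpace X] [MulAction G X]

theorem IsMinimalFlow.compHom (h : IsMinimalFlow G X) (φ : H →* G) (hφ : Surjective φ) :
    letI := MulAction.compHom X φ
    IsMinimalFlow H X := fun x => by
  have hx := h x
  rwa [← hφ.range_comp] at hx

theorem IsProximalFlow.compHom (h : IsProximalFlow G X) (φ : H →* G) (hφ : Surjective φ) :
    letI := MulAction.compHom X φ
    IsProximalFlow H X := fun x y => by
  have hxy := h x y
  rwa [← hφ.range_comp] at hxy

theorem IsMinimalFlow.subsingleton_of_forall_smul_eq [T1Space X] (h : IsMinimalFlow G X)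
    (htriv : ∀ (g : G) (x : X), g • x = x) : Subsingleton X := by
  refine ⟨fun x y => ?_⟩
  have hdense : Dense ({x} : Set X) := by
    simpa only [htriv, range_const] using h x
  have hy : y ∈ closure ({x} : Set X) := hdense.closure_eq ▸ mem_univ y
  rw [closure_singleton, mem_singleton_iff] at hy
  exact hy.symm

theorem isClosed_fixingSubgroup [TopologicalSpace G] [ContinuousSMul G X] [T1Space X]
    (s : Set X) : IsClosed (fixingSubgroup G s : Set G) := by
  have hs : (fixingSubgroup G s : Set G) = ⋂ y ∈ s, (fun g : G => g • y) ⁻¹' {y} := by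
    ext g
    simp only [SetLike.mem_coe, mem_fixingSubgroup_iff, mem_iInter, mem_preimage,
      mem_singleton_iff]
  rw [hs]
  exact isClosed_biInter fun y _ =>
    isClosed_singleton.preimage (continuous_id.smul continuous_const)

end Flows

theorem universal_minimal_proximal_effective_at
    (G : Type u) (X : Type v) [Group G] [TopologicalSpace G] [IsTopologicalGroup G]
    [TopologicalSpace X] [CompactSpace X] [T2Space X]
    [MulAction G X] [ContinuousSMul G X]
    -- X is the universal minimal proximal flow Π(G)
    (hmin : IsMinimalFlow G X) (hprox : IsProximalFlow G X)
    (huniv : ∀ (Y : Type v) [TopologicalSpace Y] [CompactSpace Y] [T2Space Y]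
      [MulAction G Y] [ContinuousSMul G Y], IsMinimalFlow G Y → IsProximalFlow G Y →
      ∃ f : X → Y, Continuous f ∧ Function.Surjective f ∧
        ∀ (g : G) (x : X), f (g • x) = g • f x)
    -- G is not strongly amenable: Π(G) is not a single point
    (hnontriv : ∃ x y : X, x ≠ y)
    (t : G)
    (ht : (Subgroup.closure (autOrbit G t)).topologicalClosure = ⊤) :
    ∃ x : X, t • x ≠ x := by
  by_contra! htriv
  have ht_mem : t ∈ fixingSubgroup G (univ : Set X) :=
    (mem_fixingSubgroup_iff G).2 fun x _ => htriv x
  have horbit : autOrbit G t ⊆ fixingSubgroup G (univ : Set X) := by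
    rintro _ ⟨a, ⟨ha, -⟩, rfl⟩
    obtain ⟨f, -, hf, hφf⟩ := @huniv X _ _ _ (MulAction.compHom X (a : G →* G))
      (MulAction.continuousSMul_compHom ha) (hmin.compHom (a : G →* G) a.surjective)
      (hprox.compHom (a : G →* G) a.surjective)
    exact map_mem_fixingSubgroup_univ (φ := a) hf hφf ht_mem
  have hker : fixingSubgroup G (univ : Set X) = ⊤ := top_le_iff.1 <| ht ▸
    Subgroup.topologicalClosure_minimal _ ((Subgroup.closure_le _).2 horbit)
      (isClosed_fixingSubgroup univ)
  have : Subsingleton X := hmin.subsingleton_of_forall_smul_eq fun g x =>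
    (mem_fixingSubgroup_iff G).1 (hker ▸ Subgroup.mem_top g) x (mem_univ x)
  obtain ⟨x, y, hxy⟩ := hnontriv
  exact hxy (Subsingleton.elim x y)
end

section
/- Let G be a topological group and S a closed subgroup of finite index in G. Then G is strongly amenable if and only if S is strongly amenable. -/
universe u v

/-- A topological group is strongly amenable if every minimal proximal flow of it is trivial. -/
def IsStronglyAmenable (G : Type u) [Group G] [TopologicalSpace G] : Prop :=
  ∀ (X : Type v) [TopologicalSpace X] [CompactSpace X] [T2Space X]
    [MulAction G X] [ContinuousSMul G X],
    IsMinimalFlow G X → IsProximalFlow G X → Subsingleton X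

/-!
Restricting a minimal proximal `G`-flow `X` to `S` keeps it proximal, since finitely many
translates of the `S`-orbit closure of a pair cover its `G`-orbit closure. It also keeps it
minimal: for the normal core `N` of `S`, proximality forces two minimal `N`-subflows to meet,
hence to coincide, so the unique one is `G`-invariant and equals `X`.

Conversely, a minimal proximal `S`-flow `Y` induces the `G`-flow of `S`-equivariant maps
`G → Y`. It is proximal, because under `N` it embeds into finitely many twisted copies of `Y`.
If `G` is strongly amenable, a minimal subflow of it is a point, i.e. a `G`-fixed map `f`; then
`f 1` is fixed by `S`, and minimality of `Y` leaves nothing else.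
-/

open Set MulAction Topology Function
open scoped Pointwise

instance Subgroup.continuousConstSMul {H X : Type*} [Group H] [TopologicalSpace X]
    [MulAction H X] [ContinuousConstSMul H X] (K : Subgroup H) : ContinuousConstSMul K X :=
  ⟨fun k => continuous_const_smul (k : H)⟩

section Flow

variable {H X : Type*} [Group H] [TopologicalSpace X] [MulAction H X]

theorem isMinimalFlow_iff_isMinimal : IsMinimalFlow H X ↔ IsMinimal H X :=
  ⟨fun h => ⟨h⟩, fun h => h.dense_orbit⟩

variable (H) in
structure IsSubflow (B : Set X) : Prop where
  nonempty : B.Nonempty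
  isClosed : IsClosed B
  smul_subset : ∀ g : H, g • B ⊆ B

theorem closure_orbit_subset_of_mem [ContinuousConstSMul H X] {B : Set X} (hB : IsClosed B)
    (hinv : ∀ g : H, g • B ⊆ B) {x : X} (hx : x ∈ B) : closure (orbit H x) ⊆ B :=
  closure_minimal (by rintro _ ⟨g, rfl⟩; exact hinv g (smul_mem_smul_set hx)) hB

theorem isSubflow_closure_orbit [ContinuousConstSMul H X] (x : X) :
    IsSubflow H (closure (orbit H x)) :=
  ⟨(nonempty_orbit x).closure, isClosed_closure, fun g => smul_closure_orbit_subset g x⟩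

theorem IsSubflow.exists_minimal_subset [CompactSpace X] {B : Set X} (hB : IsSubflow H B) :
    ∃ M ⊆ B, Minimal (IsSubflow H) M := by
  refine zorn_superset_nonempty {B | IsSubflow H B} (fun c hc hchain ⟨B₀, hB₀⟩ => ?_) B hB
  have : Nonempty c := ⟨⟨B₀, hB₀⟩⟩
  refine ⟨⋂ C : c, (C : Set X), ⟨?_, isClosed_iInter fun C => (hc C.2).isClosed, fun g => ?_⟩,
    fun C hC => iInter_subset_of_subset ⟨C, hC⟩ le_rfl⟩
  · exact IsCompact.nonempty_iInter_of_directed_nonempty_isCompact_isClosed _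
      (fun C D => (hchain.total C.2 D.2).elim (fun h => ⟨C, le_rfl, h⟩) fun h => ⟨D, h, le_rfl⟩)
      (fun C => (hc C.2).nonempty)
      (fun C => (hc C.2).isClosed.isCompact) (fun C => (hc C.2).isClosed)
  · exact (smul_set_iInter_subset g _).trans (iInter_mono fun C => (hc C.2).smul_subset g)

theorem IsSubflow.smul_of_normal [ContinuousConstSMul H X] {N : Subgroup H} [N.Normal]
    {B : Set X} (hB : IsSubflow N B) (g : H) : IsSubflow N (g • B) := by
  refine ⟨hB.nonempty.smul_set, hB.isClosed.smul g, fun n => ?_⟩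
  have hn : g⁻¹ * n * g ∈ N := by simpa using ‹N.Normal›.conj_mem n n.2 g⁻¹
  calc n • g • B = g • ((⟨g⁻¹ * n * g, hn⟩ : N) • B) := by
        simp only [Subgroup.smul_def, smul_smul, ← mul_assoc, mul_inv_cancel, one_mul]
    _ ⊆ g • B := smul_set_mono (hB.smul_subset _)

theorem IsProximalFlow.of_subgroup (K : Subgroup H) (h : IsProximalFlow K X) :
    IsProximalFlow H X :=
  fun x y => (h x y).imp fun _ hz => closure_mono (orbit_subgroup_subset K (x, y)) hz

theorem IsProximalFlow.restrict [ContinuousConstSMul H X] (K : Subgroup H) [K.FiniteIndex]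
    (h : IsProximalFlow H X) : IsProximalFlow K X := by
  intro x y
  obtain ⟨z, hz⟩ := h x y
  have hcover : orbit H (x, y) ⊆ ⋃ q : H ⧸ K, q.out • orbit K (x, y) := by
    rintro _ ⟨g, rfl⟩
    obtain ⟨k, hk⟩ := QuotientGroup.mk_out_eq_mul K g
    refine mem_iUnion.2 ⟨g, k⁻¹ • (x, y), ⟨k⁻¹, rfl⟩, ?_⟩
    simp only [hk, Subgroup.smul_def, smul_smul, Subgroup.coe_inv, mul_inv_cancel_right]
  obtain ⟨q, hq⟩ := mem_iUnion.1 <| by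
    simpa only [closure_iUnion_of_finite] using closure_mono hcover hz
  obtain ⟨p, hp, hpz⟩ := mem_smul_set.1 (closure_smul q.out (orbit K (x, y)) ▸ hq)
  refine ⟨q.out⁻¹ • z, ?_⟩
  have hp' : p = (q.out⁻¹ • z, q.out⁻¹ • z) := by
    rw [← Prod.smul_mk, ← hpz, smul_smul, inv_mul_cancel, one_smul]
  exact hp' ▸ hp

theorem IsProximalFlow.inter_nonempty [ContinuousConstSMul H X] (h : IsProximalFlow H X)
    {B₁ B₂ : Set X} (h₁ : IsSubflow H B₁) (h₂ : IsSubflow H B₂) : (B₁ ∩ B₂).Nonempty := by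
  obtain ⟨⟨y₁, hy₁⟩, ⟨y₂, hy₂⟩⟩ := And.intro h₁.nonempty h₂.nonempty
  obtain ⟨z, hz⟩ := h y₁ y₂
  have hinv : ∀ g : H, g • (B₁ ×ˢ B₂) ⊆ B₁ ×ˢ B₂ := fun g =>
    smul_set_subset_iff.2 fun p hp =>
      ⟨h₁.smul_subset g (smul_mem_smul_set hp.1), h₂.smul_subset g (smul_mem_smul_set hp.2)⟩
  have hzz :=
    closure_orbit_subset_of_mem (h₁.isClosed.prod h₂.isClosed) hinv (mk_mem_prod hy₁ hy₂) hz
  exact ⟨z, hzz.1, hzz.2⟩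

theorem IsProximalFlow.eq_of_minimal [ContinuousConstSMul H X] (h : IsProximalFlow H X)
    {M₁ M₂ : Set X} (h₁ : Minimal (IsSubflow H) M₁) (h₂ : Minimal (IsSubflow H) M₂) :
    M₁ = M₂ := by
  have hM : IsSubflow H (M₁ ∩ M₂) :=
    ⟨h.inter_nonempty h₁.prop h₂.prop, h₁.prop.isClosed.inter h₂.prop.isClosed,
      fun g => smul_set_inter_subset.trans
        (inter_subset_inter (h₁.prop.smul_subset g) (h₂.prop.smul_subset g))⟩
  exact (h₁.eq_of_subset hM inter_subset_left).symm.trans (h₂.eq_of_subset hM inter_subset_right)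

theorem IsMinimalFlow.restrict_of_normal [CompactSpace X] [ContinuousConstSMul H X]
    (N : Subgroup H) [N.Normal] (hmin : IsMinimalFlow H X) (hprox : IsProximalFlow N X) :
    IsMinimalFlow N X := by
  have := isMinimalFlow_iff_isMinimal.1 hmin
  rw [isMinimalFlow_iff_isMinimal, isMinimal_iff_isClosed_smul_invariant]
  intro s hs hinv
  refine s.eq_empty_or_nonempty.imp_right fun hne => ?_
  obtain ⟨M, hMs, hM⟩ := IsSubflow.exists_minimal_subset ⟨hne, hs, hinv⟩
  have hM_subset_smul : ∀ g : H, M ⊆ g • M := fun g => by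
    obtain ⟨M', hM'g, hM'⟩ := (hM.prop.smul_of_normal g).exists_minimal_subset
    exact (hprox.eq_of_minimal hM hM') ▸ hM'g
  have hMinv : ∀ g : H, g • M ⊆ M := fun g => by
    simpa only [subset_smul_set_iff, inv_inv] using hM_subset_smul g⁻¹
  have hMuniv := (eq_empty_or_univ_of_smul_invariant_closed H hM.prop.isClosed hMinv).resolve_left
    hM.prop.nonempty.ne_empty
  exact eq_univ_of_univ_subset (hMuniv ▸ hMs)

theorem IsMinimalFlow.subsingleton_of_fixed [T1Space X] (h : IsMinimalFlow H X) {x : X}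
    (hx : ∀ g : H, g • x = x) : Subsingleton X := by
  have horbit : (range fun g : H => g • x) = {x} := by simp only [hx, range_const]
  have hdense := h x
  rw [horbit, dense_iff_closure_eq, closure_singleton] at hdense
  exact subsingleton_of_univ_subsingleton (hdense ▸ subsingleton_singleton)

theorem IsMinimalFlow.mono {N K : Subgroup H} (hNK : N ≤ K) (h : IsMinimalFlow N X) :
    IsMinimalFlow K X :=
  fun x => (h x).mono (range_subset_iff.2 fun n : N => ⟨⟨n, hNK n.2⟩, rfl⟩)

theorem IsMinimalFlow.restrict [CompactSpace X] [ContinuousConstSMul H X] (K : Subgroup H)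
    [K.FiniteIndex] (hmin : IsMinimalFlow H X) (hprox : IsProximalFlow H X) :
    IsMinimalFlow K X :=
  (hmin.restrict_of_normal K.normalCore (hprox.restrict _)).mono K.normalCore_le

theorem IsProximalFlow.of_surjective {X' : Type*} [TopologicalSpace X'] [MulAction H X']
    (π : X →[H] X') (hπ : Continuous π) (hsurj : Surjective π) (h : IsProximalFlow H X) :
    IsProximalFlow H X' := by
  intro x' y'
  obtain ⟨⟨x, rfl⟩, ⟨y, rfl⟩⟩ := And.intro (hsurj x') (hsurj y')
  obtain ⟨z, hz⟩ := h x y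
  refine ⟨π z, map_mem_closure (f := Prod.map π π) (hπ.prodMap hπ) hz ?_⟩
  rintro _ ⟨g, rfl⟩
  exact ⟨g, by simp only [Prod.map, map_smul]⟩

theorem isMinimalFlow_subMulAction [ContinuousConstSMul H X] (p : SubMulAction H X)
    (hp : Minimal (IsSubflow H) (p : Set X)) : IsMinimalFlow H p := by
  intro m x
  have hcl : closure (orbit H (m : X)) = (p : Set X) :=
    hp.eq_of_subset (isSubflow_closure_orbit _) (closure_orbit_subset_of_mem hp.prop.isClosed
      hp.prop.smul_subset m.2)
  exact closure_subtype.2 (by rw [← orbit, SubMulAction.val_image_orbit, hcl]; exact x.2)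

theorem IsProximalFlow.subMulAction [ContinuousConstSMul H X] (p : SubMulAction H X)
    (hp : IsClosed (p : Set X)) (h : IsProximalFlow H X) : IsProximalFlow H p := by
  intro x y
  obtain ⟨z, hz⟩ := h x y
  have hinv : ∀ g : H, g • ((p : Set X) ×ˢ (p : Set X)) ⊆ (p : Set X) ×ˢ (p : Set X) := fun g =>
    smul_set_subset_iff.2 fun q hq => ⟨p.smul_mem g hq.1, p.smul_mem g hq.2⟩
  have hzp : z ∈ p := (closure_orbit_subset_of_mem (hp.prod hp) hinv (mk_mem_prod x.2 y.2) hz).1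
  refine ⟨⟨z, hzp⟩, ?_⟩
  rw [(IsInducing.subtypeVal.prodMap IsInducing.subtypeVal).closure_eq_preimage_closure_image,
    ← range_comp]
  exact hz

end Flow

theorem IsStronglyAmenable.exists_fixed_point {G : Type u} [Group G] [TopologicalSpace G]
    (hG : IsStronglyAmenable.{u, v} G) {X : Type v} [TopologicalSpace X] [CompactSpace X]
    [T2Space X] [Nonempty X] [MulAction G X] [ContinuousSMul G X] (hprox : IsProximalFlow G X) :
    ∃ x : X, ∀ g : G, g • x = x := by
  obtain ⟨M, -, hM⟩ := IsSubflow.exists_minimal_subset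
    (⟨univ_nonempty, isClosed_univ, fun _ => subset_univ _⟩ : IsSubflow G (univ : Set X))
  let p : SubMulAction G X := ⟨M, fun g _ hx => hM.prop.smul_subset g (smul_mem_smul_set hx)⟩
  have : CompactSpace p := isCompact_iff_compactSpace.1 hM.prop.isClosed.isCompact
  have : ContinuousSMul G p :=
    ⟨(continuous_fst.smul (continuous_subtype_val.comp continuous_snd)).subtype_mk _⟩
  have : Subsingleton p :=
    hG p (isMinimalFlow_subMulAction p hM) (hprox.subMulAction p hM.prop.isClosed)
  obtain ⟨x, hx⟩ := hM.prop.nonempty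
  exact ⟨x, fun g => congrArg Subtype.val (Subsingleton.elim (g • (⟨x, hx⟩ : p)) ⟨x, hx⟩)⟩

/-- `IsStronglyAmenable.{u, v}` only speaks about flows in `Type v`, so `X` is transported onto
its image in `Z`. -/
theorem IsStronglyAmenable.exists_fixed_point_of_injective {G : Type u} [Group G]
    [TopologicalSpace G] (hG : IsStronglyAmenable.{u, v} G) {X : Type*} [TopologicalSpace X]
    [CompactSpace X] [Nonempty X] [MulAction G X] [ContinuousSMul G X]
    (hprox : IsProximalFlow G X) {Z : Type v} [TopologicalSpace Z] [T2Space Z] {ι : X → Z}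
    (hι : Continuous ι) (hinj : Injective ι) : ∃ x : X, ∀ g : G, g • x = x := by
  let e : X ≃ₜ range ι :=
    Continuous.homeoOfEquivCompactToT2 (f := Equiv.ofInjective ι hinj) (hι.subtype_mk _)
  let : MulAction G (range ι) := e.symm.toEquiv.mulAction G
  have : CompactSpace (range ι) := e.compactSpace
  have : ContinuousSMul G (range ι) :=
    ⟨e.continuous.comp (continuous_fst.smul (e.symm.continuous.comp continuous_snd))⟩
  let π : X →[G] range ι := ⟨e, fun g x => by simp [Equiv.smul_def]⟩
  obtain ⟨w, hw⟩ := hG.exists_fixed_point (hprox.of_surjective π e.continuous e.surjective)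
  exact ⟨e.symm w, fun g => by simpa [Equiv.smul_def] using congrArg e.symm (hw g)⟩

section Semiconj

variable {H K X Y ι : Type*} [Group H] [Group K] [TopologicalSpace X] [MulAction H X]
  [TopologicalSpace Y] [T2Space Y] [MulAction K Y]
  {σ : ι → H → K} {φ : ι → X → Y}

theorem closure_orbit_subset_setOf_apply_eq [ContinuousConstSMul H X]
    (hφ : ∀ i, Continuous (φ i)) (hφσ : ∀ i h x, φ i (h • x) = σ i h • φ i x) {i : ι}
    {c : X × X} (hc : φ i c.1 = φ i c.2) :
    closure (orbit H c) ⊆ {p | φ i p.1 = φ i p.2} :=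
  closure_orbit_subset_of_mem
    (isClosed_eq ((hφ i).comp continuous_fst) ((hφ i).comp continuous_snd))
    (fun g => smul_set_subset_iff.2 fun p (hp : φ i p.1 = φ i p.2) => by
      change φ i (g • p.1) = φ i (g • p.2)
      rw [hφσ, hφσ, hp])
    hc

theorem exists_mem_closure_orbit_apply_eq [CompactSpace X] (hσ : ∀ i, Surjective (σ i))
    (hφ : ∀ i, Continuous (φ i)) (hφσ : ∀ i h x, φ i (h • x) = σ i h • φ i x)
    (hY : IsProximalFlow K Y) (i : ι) (c : X × X) :
    ∃ d ∈ closure (orbit H c), φ i d.1 = φ i d.2 := by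
  obtain ⟨z, hz⟩ := hY (φ i c.1) (φ i c.2)
  have hclosed : IsClosed (Prod.map (φ i) (φ i) '' closure (orbit H c)) :=
    (isClosed_closure.isCompact.image ((hφ i).prodMap (hφ i))).isClosed
  have hsub : orbit K (φ i c.1, φ i c.2) ⊆ Prod.map (φ i) (φ i) '' closure (orbit H c) := by
    rintro _ ⟨k, rfl⟩
    obtain ⟨h, rfl⟩ := hσ i k
    refine ⟨h • c, subset_closure (mem_orbit c h), ?_⟩
    change (φ i (h • c.1), φ i (h • c.2)) = _
    rw [hφσ, hφσ]
    rfl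
  obtain ⟨d, hd, hdz⟩ := closure_minimal hsub hclosed hz
  exact ⟨d, hd, (congrArg Prod.fst hdz).trans (congrArg Prod.snd hdz).symm⟩

theorem IsProximalFlow.of_semiconj [CompactSpace X] [ContinuousConstSMul H X] [Finite ι]
    (hσ : ∀ i, Surjective (σ i)) (hφ : ∀ i, Continuous (φ i))
    (hφσ : ∀ i h x, φ i (h • x) = σ i h • φ i x)
    (hinj : ∀ x x', (∀ i, φ i x = φ i x') → x = x') (hY : IsProximalFlow K Y) :
    IsProximalFlow H X := by
  classical
  have key : ∀ (s : Finset ι) (c : X × X),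
      ∃ d ∈ closure (orbit H c), ∀ i ∈ s, φ i d.1 = φ i d.2 := by
    intro s
    induction s using Finset.induction_on with
    | empty => exact fun c => ⟨c, subset_closure (mem_orbit_self c), by simp⟩
    | insert j s _ ih =>
      intro c
      obtain ⟨d, hd, hds⟩ := ih c
      obtain ⟨d', hd', hd'j⟩ := exists_mem_closure_orbit_apply_eq hσ hφ hφσ hY j d
      refine ⟨d', closure_orbit_subset_of_mem isClosed_closure (smul_closure_orbit_subset · c)
        hd hd', ?_⟩
      simp only [Finset.mem_insert, forall_eq_or_imp]
      exact ⟨hd'j, fun i hi => closure_orbit_subset_setOf_apply_eq hφ hφσ (hds i hi) hd'⟩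
  intro x y
  have := Fintype.ofFinite ι
  obtain ⟨d, hd, hdeq⟩ := key Finset.univ (x, y)
  have hdiag : d = (d.1, d.1) :=
    Prod.ext rfl (hinj _ _ fun i => hdeq i (Finset.mem_univ i)).symm
  exact ⟨d.1, hdiag ▸ hd⟩

end Semiconj

section

variable {G : Type*} [Group G] (S : Subgroup G) (Y : Type*) [MulAction S Y]

/-- The flow induced from an `S`-flow `Y`, realised as the `S`-equivariant maps `G → Y`. -/
abbrev Coinduced : Type _ := {f : G → Y // ∀ (g : G) (s : S), f (g * s) = s⁻¹ • f g}

namespace Coinduced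

variable {S Y}

instance : SMul G (Coinduced S Y) :=
  ⟨fun g f => ⟨fun x => f.1 (g⁻¹ * x), fun x s => by simp only [← mul_assoc, f.2]⟩⟩

theorem smul_apply (g : G) (f : Coinduced S Y) (x : G) : (g • f).1 x = f.1 (g⁻¹ * x) := rfl

instance : MulAction G (Coinduced S Y) where
  one_smul f := Subtype.ext <| funext fun x => by rw [smul_apply, inv_one, one_mul]
  mul_smul g h f := Subtype.ext <| funext fun x => by
    rw [smul_apply, smul_apply, smul_apply, mul_inv_rev, mul_assoc]

theorem exists_forall_apply_eq_smul_apply_out (g : G) :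
    ∃ s : S, ∀ f : Coinduced S Y, f.1 g = s • f.1 (g : G ⧸ S).out := by
  obtain ⟨s, hs⟩ := QuotientGroup.mk_out_eq_mul S g
  exact ⟨s, fun f => by rw [hs, f.2, smul_inv_smul]⟩

theorem ext_of_out {f f' : Coinduced S Y} (h : ∀ q : G ⧸ S, f.1 q.out = f'.1 q.out) :
    f = f' :=
  Subtype.ext <| funext fun g => by
    obtain ⟨s, hs⟩ := exists_forall_apply_eq_smul_apply_out (S := S) (Y := Y) g
    rw [hs, hs, h]

theorem smul_apply_one_eq_of_fixed {f : Coinduced S Y} (hf : ∀ g : G, g • f = f) (s : S) :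
    s • f.1 1 = f.1 1 :=
  calc s • f.1 1 = f.1 (1 * s⁻¹) := by rw [f.2, inv_inv]
    _ = ((s : G) • f).1 1 := by rw [smul_apply, one_mul, mul_one, Subgroup.coe_inv]
    _ = f.1 1 := by rw [hf]

instance [Nonempty Y] : Nonempty (Coinduced S Y) := by
  obtain ⟨y⟩ := ‹Nonempty Y›
  let t : G → S := fun g =>
    ⟨g⁻¹ * (g : G ⧸ S).out, QuotientGroup.eq.1 (QuotientGroup.out_eq' _).symm⟩
  refine ⟨⟨fun g => t g • y, fun g s => ?_⟩⟩
  rw [smul_smul]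
  refine congrArg (· • y) (Subtype.ext ?_)
  simp [t, QuotientGroup.mk_mul_of_mem g s.2, mul_assoc]

variable [TopologicalSpace Y]

instance [ContinuousConstSMul S Y] : ContinuousConstSMul G (Coinduced S Y) :=
  ⟨fun g => continuous_induced_rng.2 <| continuous_pi fun x =>
    (continuous_apply (g⁻¹ * x)).comp continuous_subtype_val⟩

instance [CompactSpace Y] [T2Space Y] [ContinuousConstSMul S Y] :
    CompactSpace (Coinduced S Y) := by
  have : IsClosed {f : G → Y | ∀ (g : G) (s : S), f (g * s) = s⁻¹ • f g} := by
    simp only [ofPred_forall]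
    exact isClosed_iInter fun g => isClosed_iInter fun s =>
      isClosed_eq (continuous_apply _) ((continuous_apply g).const_smul _)
  exact isCompact_iff_compactSpace.1 this.isCompact

theorem exists_continuous_injective_fin_pi [S.FiniteIndex] :
    ∃ (k : ℕ) (ι : Coinduced S Y → Fin k → Y), Continuous ι ∧ Injective ι := by
  let e := Finite.equivFin (G ⧸ S)
  refine ⟨_, fun f i => f.1 (e.symm i).out,
    continuous_pi fun i => (continuous_apply _).comp continuous_subtype_val,
    fun f f' h => ext_of_out fun q => ?_⟩
  simpa using congrFun h (e q)

/-- At a coset representative `r`, an element `n` of the normal core `N` of `S` acts on the value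
`f r` through `r⁻¹ * n * r ∈ N`. -/
theorem isProximalFlow [CompactSpace Y] [T2Space Y] [ContinuousConstSMul S Y] [S.FiniteIndex]
    (hY : IsProximalFlow S Y) : IsProximalFlow G (Coinduced S Y) := by
  have hNS : S.normalCore ≤ S := S.normalCore_le
  let σ : G ⧸ S → S.normalCore → S.normalCore.subgroupOf S := fun q =>
    (Subgroup.subgroupOfEquivOfLe hNS).symm ∘ MulAut.conjNormal q.out⁻¹
  refine IsProximalFlow.of_subgroup _ <| IsProximalFlow.of_semiconj (σ := σ)
    (φ := fun q f => f.1 q.out)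
    (fun q => (Subgroup.subgroupOfEquivOfLe hNS).symm.surjective.comp
      (MulAut.conjNormal _).surjective)
    (fun q => (continuous_apply _).comp continuous_subtype_val) (fun q n f => ?_)
    (fun f f' h => ext_of_out h) (hY.restrict _)
  have hσ : ((σ q n : S) : G) = q.out⁻¹ * n * q.out := by simp [σ]
  have hmul : (n : G)⁻¹ * q.out = q.out * ((σ q n : S)⁻¹ : S) := by
    rw [Subgroup.coe_inv, hσ]; group
  change f.1 ((n : G)⁻¹ * q.out) = (σ q n : S) • f.1 q.out
  rw [hmul, f.2, inv_inv]

variable [TopologicalSpace G] [IsTopologicalGroup G] [ContinuousSMul S Y]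

/-- Evaluation is jointly continuous because, near `a`, `f (a * s) = s⁻¹ • f a` with `s ∈ S`
ranging over an open set. -/
theorem continuous_eval (hS : IsOpen (S : Set G)) :
    Continuous fun p : G × Coinduced S Y => p.2.1 p.1 := by
  refine continuous_iff_continuousAt.2 fun ⟨a, f⟩ => ?_
  have he : IsOpenEmbedding (Prod.map (fun s : S => a * s) (id : Coinduced S Y → _)) :=
    ((Homeomorph.mulLeft a).isOpenEmbedding.comp hS.isOpenEmbedding_subtypeVal).prodMap .id
  have hcomp : Continuous ((fun p : G × Coinduced S Y => p.2.1 p.1) ∘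
      Prod.map (fun s : S => a * s) id) := by
    have : ((fun p : G × Coinduced S Y => p.2.1 p.1) ∘ Prod.map (fun s : S => a * s) id)
        = fun q => q.1⁻¹ • q.2.1 a :=
      funext fun q => q.2.2 a q.1
    rw [this]
    exact continuous_fst.inv.smul
      ((continuous_apply a).comp (continuous_subtype_val.comp continuous_snd))
  have := (he.continuousAt_iff (x := (1, f))).1 hcomp.continuousAt
  simpa using this

theorem continuousSMul (hS : IsOpen (S : Set G)) : ContinuousSMul G (Coinduced S Y) :=
  ⟨continuous_induced_rng.2 <| continuous_pi fun _ => (continuous_eval hS).comp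
    ((continuous_fst.inv.mul continuous_const).prodMk continuous_snd)⟩

end Coinduced

end

theorem stronglyAmenable_iff_finiteIndex_closed_subgroup
    (G : Type u) [Group G] [TopologicalSpace G] [IsTopologicalGroup G]
    (S : Subgroup G) (hS : IsClosed (S : Set G)) [S.FiniteIndex] :
    IsStronglyAmenable.{u, v} G ↔ IsStronglyAmenable.{u, v} S := by
  constructor
  · intro hG Y _ _ _ _ _ hmin hprox
    rcases isEmpty_or_nonempty Y with _ | _
    · infer_instance
    have := Coinduced.continuousSMul (Y := Y) (S.isOpen_of_isClosed_of_finiteIndex hS)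
    obtain ⟨k, ι, hι, hinj⟩ := Coinduced.exists_continuous_injective_fin_pi (S := S) (Y := Y)
    obtain ⟨f, hf⟩ := hG.exists_fixed_point_of_injective (Coinduced.isProximalFlow hprox) hι hinj
    exact IsMinimalFlow.subsingleton_of_fixed hmin (Coinduced.smul_apply_one_eq_of_fixed hf)
  · intro hS' X _ _ _ _ _ hmin hprox
    exact hS' X (hmin.restrict S hprox) (hprox.restrict S)
end
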